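/- Let I = I_H ⊆ R be the edge ideal of a cointerval d-graph, with generators ordered lexicographically decreasing. For m ∈ G(I) and α ⊆ set(m) define ψ(m;∅) := m and, for α ≠ ∅, ψ(m;α) := Σ_{t ∈ T(α)} (−1)^{ε(α;t)} (x_t·m / c(x_t·m)) · (c(x_t·m); α∖{t}), where ε(α;t) := #{s ∈ α : s < t}. Let d_K(m;α) := Σ_{t ∈ α} (−1)^{ε(α;t)} x_t · (m; α∖{t}) be the Koszul differential, and let d be given by d(m;α) = Σ_{t ∈ α} (−1)^{ε(α;t)+1} x_t (m; α∖{t}) + Σ_{t ∈ T(α)} (−1)^{ε(α;t)} (x_t·m / c(x_t·m)) (c(x_t·m); α∖{t}), with the convention that a symbol (u;β) is 0 if β ⊄ set(u). Then for every m ∈ G(I) and every α ⊆ set(m), ψ(d_K(m;α)) = d(ψ(m;α)); that is, ψ is a chain map lifting the inclusion of colon ideals used in the mapping cone construction. -/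

import Mathlib

open MvPolynomial

/-- The monomial ideal generated by a set of exponent vectors. -/
noncomputable def genIdeal (K : Type*) [Field K] {n : ℕ} (ms : Set (Fin n →₀ ℕ)) :
    Ideal (MvPolynomial (Fin n) K) :=
  Ideal.span ((fun u => MvPolynomial.monomial u (1 : K)) '' ms)

/-- The colon ideal `⟨m_1, …, m_{j-1}⟩ : m_j`. -/
noncomputable def colonJ (K : Type*) [Field K] {n k : ℕ} (m : Fin k → (Fin n →₀ ℕ))
    (j : Fin k) : Ideal (MvPolynomial (Fin n) K) :=
  Submodule.colon (genIdeal K {u | ∃ i : Fin k, i < j ∧ u = m i})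
    (Ideal.span {MvPolynomial.monomial (m j) (1 : K)})

/-- `I` has linear quotients w.r.t. the ordering `m_1,…,m_k` of its generators:
each colon ideal is generated by a subset of the variables. -/
def HasLinearQuotients (K : Type*) [Field K] {n k : ℕ}
    (m : Fin k → (Fin n →₀ ℕ)) : Prop :=
  ∀ j : Fin k, ∃ S : Set (Fin n),
    colonJ K m j = Ideal.span ((fun s => (MvPolynomial.X s : MvPolynomial (Fin n) K)) '' S)

/-- `set(m_j) = {i : x_i ∈ ⟨m_1,…,m_{j-1}⟩ : m_j}`. -/
def mset (K : Type*) [Field K] {n k : ℕ} (m : Fin k → (Fin n →₀ ℕ)) (j : Fin k) :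
    Set (Fin n) :=
  {t | (MvPolynomial.X t : MvPolynomial (Fin n) K) ∈ colonJ K m j}

/-- The `m i` are minimal monomial generators: none divides another. -/
def MinimalGens {n k : ℕ} (m : Fin k → (Fin n →₀ ℕ)) : Prop :=
  ∀ i j : Fin k, m i ≤ m j → i = j

/-- `b` is the decomposition function: for a monomial `u ∈ I`, `b u` is the smallest
index `j` with `u ∈ ⟨m_1,…,m_j⟩`. -/
def IsDecompositionFunction (K : Type*) [Field K] {n k : ℕ}
    (m : Fin k → (Fin n →₀ ℕ)) (b : (Fin n →₀ ℕ) → Fin k) : Prop :=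
  ∀ u : Fin n →₀ ℕ, MvPolynomial.monomial u (1 : K) ∈ genIdeal K (Set.range m) →
    (MvPolynomial.monomial u (1 : K) ∈ genIdeal K {v | ∃ i : Fin k, i ≤ b u ∧ v = m i}) ∧
    (∀ j : Fin k,
      MvPolynomial.monomial u (1 : K) ∈ genIdeal K {v | ∃ i : Fin k, i ≤ j ∧ v = m i} →
      b u ≤ j)

/-- The decomposition function is regular: `set(b(x_t·m)) ⊆ set(m)` for every
generator `m` and every `t ∈ set(m)`. -/
def IsRegularDecomp (K : Type*) [Field K] {n k : ℕ}
    (m : Fin k → (Fin n →₀ ℕ)) (b : (Fin n →₀ ℕ) → Fin k) : Prop :=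
  ∀ j : Fin k, ∀ t ∈ mset K m j,
    mset K m (b (m j + Finsupp.single t 1)) ⊆ mset K m j

/-- The exponent vector of the squarefree monomial `x_{f 0} ⋯ x_{f (d-1)}`. -/
noncomputable def vecOfFin {n d : ℕ} (f : Fin d → Fin n) : Fin n →₀ ℕ :=
  ∑ l : Fin d, Finsupp.single (f l) 1

/-- The exchange property defining cointerval ideals: for every squarefree monomial
`x_{i_1}⋯x_{i_d} ∈ I` (`i_1 < … < i_d`), every `t ≤ d` and all `j_1 < … < j_t` with
`j_s ≤ i_s` and `{j_1,…,j_t} ∩ {i_{t+1},…,i_d} = ∅`, the monomial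
`x_{j_1}⋯x_{j_t}·x_{i_{t+1}}⋯x_{i_d}` also lies in `I`. -/
def CointervalIdeal (K : Type*) [Field K] {n : ℕ} (d : ℕ)
    (I : Ideal (MvPolynomial (Fin n) K)) : Prop :=
  ∀ f : Fin d → Fin n, StrictMono f →
    MvPolynomial.monomial (vecOfFin f) (1 : K) ∈ I →
    ∀ (t : ℕ) (ht : t ≤ d), ∀ g : Fin t → Fin n, StrictMono g →
      (∀ s : Fin t, g s ≤ f (Fin.castLE ht s)) →
      (∀ (s : Fin t) (l : Fin d), t ≤ (l : ℕ) → g s ≠ f l) →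
      MvPolynomial.monomial
          ((∑ s : Fin t, Finsupp.single (g s) 1) +
            ∑ l ∈ Finset.univ.filter (fun l : Fin d => t ≤ (l : ℕ)),
              Finsupp.single (f l) 1) (1 : K) ∈ I

/-- `u >_lex v` for exponent vectors: at the smallest index where they differ, `u` is
larger. -/
def lexGt {n : ℕ} (u v : Fin n →₀ ℕ) : Prop :=
  ∃ i : Fin n, (∀ j : Fin n, j < i → u j = v j) ∧ v i < u i

/-- The generators are listed in lexicographically decreasing order. -/
def LexDec {n k : ℕ} (m : Fin k → (Fin n →₀ ℕ)) : Prop :=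
  ∀ a b : Fin k, a < b → lexGt (m a) (m b)

/-- `u` is the exponent vector of a squarefree monomial of degree `d`. -/
def SqFreeDeg {n : ℕ} (d : ℕ) (u : Fin n →₀ ℕ) : Prop :=
  (∀ a : Fin n, u a ≤ 1) ∧ u.support.card = d

/-- The map `c`: for a generator `m` and `a ∈ set(m)`, `c(x_a·m) = x_a·m / x_{i_k}`
where `i_k` is the smallest element of `supp(m)` with `a ≤ i_k`. -/
noncomputable def cFun {n : ℕ} (u : Fin n →₀ ℕ) (a : Fin n) : Fin n →₀ ℕ :=
  if h : (u.support.filter (fun v => a ≤ v)).Nonempty then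
    u + Finsupp.single a 1 -
      Finsupp.single ((u.support.filter (fun v => a ≤ v)).min' h) 1
  else u + Finsupp.single a 1

open scoped Classical

/-- `ε(α;t) = #{s ∈ α : s < t}`. -/
def eps {n : ℕ} (α : Finset (Fin n)) (t : Fin n) : ℕ := (α.filter (· < t)).card

/-- `a ∈ A_{l+1}` (0-based `l`) for the generator with exponent vector `u`: exactly
`l` elements of `supp(u) = {i_1 < … < i_d}` lie below `a` (so `i_l < a < i_{l+1}`),
`a ∉ supp(u)`, and the replaced monomial `x_{i_1}⋯x_{i_l}·x_a·x_{i_{l+2}}⋯x_{i_d}`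
(which is `c(x_a·u)`) lies in `I`. -/
def inA (K : Type*) [Field K] {n k : ℕ} (m : Fin k → (Fin n →₀ ℕ))
    (u : Fin n →₀ ℕ) (a : Fin n) (l : ℕ) : Prop :=
  (u.support.filter (· < a)).card = l ∧ a ∉ u.support ∧
    MvPolynomial.monomial (cFun u a) (1 : K) ∈ genIdeal K (Set.range m)

/-- `T(α) = {max(α ∩ A_ℓ) : 1 ≤ ℓ ≤ d, α ∩ A_ℓ ≠ ∅}`. -/
noncomputable def TFin (K : Type*) [Field K] {n k : ℕ} (d : ℕ)
    (m : Fin k → (Fin n →₀ ℕ)) (u : Fin n →₀ ℕ) (α : Finset (Fin n)) :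
    Finset (Fin n) :=
  α.filter (fun t => ∃ l : Fin d, inA K m u t l ∧ ∀ s ∈ α, inA K m u s l → s ≤ t)

/-- The big free module containing the complexes: basis `none` for `F_0 = R`, and
basis elements `some (j, β)` for the symbols `(m_j; β)`. -/
abbrev BigFree (K : Type*) [Field K] (n k : ℕ) : Type _ :=
  Option (Fin k × Finset (Fin n)) →₀ MvPolynomial (Fin n) K

/-- The symbol `(u;β)` where `u` is given as an exponent vector: it is the basis
element `(j';β)` when `u = m j'` and `β ⊆ set(u)`, and `0` otherwise. -/
noncomputable def symOfVec (K : Type*) [Field K] {n k : ℕ}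
    (m : Fin k → (Fin n →₀ ℕ)) (v : Fin n →₀ ℕ) (β : Finset (Fin n)) :
    BigFree K n k :=
  ∑ j' : Fin k, if m j' = v ∧ ↑β ⊆ mset K m j' then
    Finsupp.single (some (j', β)) 1 else 0

/-- The symbol `(j;β)`, interpreted as `0` when `β ⊄ set(m_j)`. -/
noncomputable def symIdx (K : Type*) [Field K] {n k : ℕ}
    (m : Fin k → (Fin n →₀ ℕ)) (j : Fin k) (β : Finset (Fin n)) :
    BigFree K n k :=
  if ↑β ⊆ mset K m j then Finsupp.single (some (j, β)) 1 else 0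

/-- The chain map `ψ` on basis symbols: `ψ(m;∅) = m` and, for `α ≠ ∅`,
`ψ(m;α) = Σ_{t ∈ T(α)} (−1)^{ε(α;t)} (x_t·m/c(x_t·m)) (c(x_t·m); α∖t)`. -/
noncomputable def psiB (K : Type*) [Field K] {n k : ℕ} (d : ℕ)
    (m : Fin k → (Fin n →₀ ℕ)) : Option (Fin k × Finset (Fin n)) → BigFree K n k
  | none => 0
  | some (j, α) =>
    if ↑α ⊆ mset K m j then
      if α = ∅ then Finsupp.single none (MvPolynomial.monomial (m j) (1 : K))
      else
        ∑ t ∈ TFin K d m (m j) α,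
          (((-1 : MvPolynomial (Fin n) K) ^ (eps α t)) *
              MvPolynomial.monomial
                ((m j + Finsupp.single t 1) - cFun (m j) t) (1 : K)) •
            symOfVec K m (cFun (m j) t) (α.erase t)
    else 0

/-- The Koszul differential on basis symbols:
`d_K(m;α) = Σ_{t ∈ α} (−1)^{ε(α;t)} x_t (m;α∖t)`. -/
noncomputable def dKB (K : Type*) [Field K] {n k : ℕ}
    (m : Fin k → (Fin n →₀ ℕ)) : Option (Fin k × Finset (Fin n)) → BigFree K n k
  | none => 0
  | some (j, α) =>
    if ↑α ⊆ mset K m j then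
      ∑ t ∈ α,
        (((-1 : MvPolynomial (Fin n) K) ^ (eps α t)) * MvPolynomial.X t) •
          Finsupp.single (some (j, α.erase t)) 1
    else 0

/-- The differential `d` of the resolution on basis symbols: `d(m;∅) = m` and, for
`α ≠ ∅`, `d(m;α) = Σ_{t ∈ α} (−1)^{ε(α;t)+1} x_t (m;α∖t)
+ Σ_{t ∈ T(α)} (−1)^{ε(α;t)} (x_t·m/c(x_t·m)) (c(x_t·m); α∖t)`,
with `(u;β) = 0` when `β ⊄ set(u)`. -/
noncomputable def dFB (K : Type*) [Field K] {n k : ℕ} (d : ℕ)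
    (m : Fin k → (Fin n →₀ ℕ)) : Option (Fin k × Finset (Fin n)) → BigFree K n k
  | none => 0
  | some (j, α) =>
    if ↑α ⊆ mset K m j then
      if α = ∅ then Finsupp.single none (MvPolynomial.monomial (m j) (1 : K))
      else
        (∑ t ∈ α,
          (((-1 : MvPolynomial (Fin n) K) ^ (eps α t + 1)) * MvPolynomial.X t) •
            symIdx K m j (α.erase t))
        + ∑ t ∈ TFin K d m (m j) α,
            (((-1 : MvPolynomial (Fin n) K) ^ (eps α t)) *
                MvPolynomial.monomial
                  ((m j + Finsupp.single t 1) - cFun (m j) t) (1 : K)) •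
              symOfVec K m (cFun (m j) t) (α.erase t)
    else 0

/-!
For a cointerval ideal, `set(m)` is the union of the gaps `i_{ℓ-1} < t < i_ℓ` of the support
`i_1 < ⋯ < i_d` of `m`, and `c(x_t·m)` replaces `x_{i_ℓ}` by `x_t`; the exchange property is what
makes `c(x_t·m)` a generator. Both `ψ(d_K(m;α))` and `d(ψ(m;α))` expand into sums over ordered
pairs `(t, s)` of distinct elements of `α`, and the terms cancel under `(t, s) ↦ (s, t)`:
Koszul terms by the sign rule `ε(α;t) + ε(α∖t;s) = ε(α;s) + ε(α∖s;t) ± 1`; the double-swap terms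
of two different gaps because such swaps commute; and for `s < t` in the same gap, the double swap
`c(x_s·c(x_t·m)) = c(x_s·m)` matches the `ψ ∘ d_K` term of `(t, s)`.
-/

section Development

variable {K : Type*} [Field K] {n k d : ℕ}

lemma lexGt_asymm {u v : Fin n →₀ ℕ} (h : lexGt u v) : ¬ lexGt v u := by
  rintro ⟨i₂, hagree₂, hlt₂⟩
  obtain ⟨i₁, hagree₁, hlt₁⟩ := h
  rcases lt_trichotomy i₁ i₂ with hc | rfl | hc
  · exact absurd (hagree₂ i₁ hc) (by omega)
  · omega
  · exact absurd (hagree₁ i₂ hc) (by omega)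

lemma lexGt_irrefl (u : Fin n →₀ ℕ) : ¬ lexGt u u := by
  rintro ⟨i, -, hlt⟩
  exact lt_irrefl _ hlt

lemma LexDec.injective {m : Fin k → (Fin n →₀ ℕ)} (hlex : LexDec m) :
    Function.Injective m := by
  intro a b hab
  by_contra hne
  rcases lt_or_gt_of_ne hne with h | h
  · exact lexGt_irrefl _ (hab ▸ hlex a b h)
  · exact lexGt_irrefl _ (hab ▸ hlex b a h)

lemma monomial_mem_genIdeal_iff {w : Fin n →₀ ℕ} {S : Set (Fin n →₀ ℕ)} :
    monomial w (1 : K) ∈ genIdeal K S ↔ ∃ v ∈ S, v ≤ w := by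
  rw [genIdeal, mem_ideal_span_monomial_image]
  simp [support_monomial]

lemma monomial_mem_genIdeal_range {m : Fin k → (Fin n →₀ ℕ)} (j : Fin k) :
    monomial (m j) (1 : K) ∈ genIdeal K (Set.range m) :=
  monomial_mem_genIdeal_iff.mpr ⟨m j, ⟨j, rfl⟩, le_rfl⟩

lemma mem_mset_iff {m : Fin k → (Fin n →₀ ℕ)} {j : Fin k} {t : Fin n} :
    t ∈ mset K m j ↔
      monomial (m j + Finsupp.single t 1) (1 : K) ∈ genIdeal K {u | ∃ i, i < j ∧ u = m i} := by
  have hX : (X t : MvPolynomial (Fin n) K) * monomial (m j) 1 =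
      monomial (m j + Finsupp.single t 1) 1 := by
    rw [X, monomial_mul, one_mul, add_comm]
  rw [mset, Set.mem_ofPred_eq, colonJ, Ideal.span, Submodule.mem_colon_span_singleton,
    smul_eq_mul, hX]

namespace SqFreeDeg

variable {u v : Fin n →₀ ℕ}

lemma apply_eq (hu : SqFreeDeg d u) (a : Fin n) :
    u a = if a ∈ u.support then 1 else 0 := by
  have := hu.1 a
  split_ifs with h
  · have := Finsupp.mem_support_iff.mp h; omega
  · simpa using h

lemma eq_of_support_eq (hu : SqFreeDeg d u) (hv : SqFreeDeg d v)
    (h : u.support = v.support) : u = v := by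
  ext a; rw [hu.apply_eq, hv.apply_eq, h]

lemma eq_of_le (hu : SqFreeDeg d u) (hv : SqFreeDeg d v) (h : u ≤ v) : u = v :=
  hu.eq_of_support_eq hv <| Finset.eq_of_subset_of_card_le (Finsupp.support_mono h)
    (by rw [hu.2, hv.2])

lemma sum_single_support (hu : SqFreeDeg d u) : ∑ a ∈ u.support, Finsupp.single a 1 = u := by
  ext a
  rw [Finsupp.finsetSum_apply, hu.apply_eq]
  simp only [Finsupp.single_apply]
  rw [Finset.sum_ite_eq' u.support a (fun _ => 1)]

end SqFreeDeg

lemma exists_eq_of_monomial_mem {m : Fin k → (Fin n →₀ ℕ)} (hsf : ∀ j, SqFreeDeg d (m j))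
    {w : Fin n →₀ ℕ} (hw : SqFreeDeg d w) (hmem : monomial w (1 : K) ∈ genIdeal K (Set.range m)) :
    ∃ i, m i = w := by
  obtain ⟨_, ⟨i, rfl⟩, hle⟩ := monomial_mem_genIdeal_iff.mp hmem
  exact ⟨i, (hsf i).eq_of_le hw hle⟩

/-- `t` lies in a gap `i_{ℓ-1} < t < i_ℓ` of the support `i_1 < ⋯ < i_d` of `u`. -/
structure InGap (u : Fin n →₀ ℕ) (t : Fin n) : Prop where
  not_mem : t ∉ u.support
  nonempty : (u.support.filter (fun v => t ≤ v)).Nonempty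

/-- The `i_k` of the definition of `c(x_t·u)` (junk value `t` if there is none). -/
noncomputable def nextSupp (u : Fin n →₀ ℕ) (t : Fin n) : Fin n :=
  if h : (u.support.filter (fun v => t ≤ v)).Nonempty then
    (u.support.filter (fun v => t ≤ v)).min' h else t

/-- For `t ∈ set(u)`, `t ∈ A_{ℓ+1}` exactly when `gapIndex u t = ℓ`. -/
def gapIndex (u : Fin n →₀ ℕ) (t : Fin n) : ℕ := (u.support.filter (fun v => v < t)).card

section NextSupp

variable {u : Fin n →₀ ℕ} {s t : Fin n}

lemma nextSupp_mem (hE : (u.support.filter (fun v => t ≤ v)).Nonempty) :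
    nextSupp u t ∈ u.support := by
  rw [nextSupp, dif_pos hE]
  exact (Finset.mem_filter.mp (Finset.min'_mem _ hE)).1

lemma le_nextSupp (hE : (u.support.filter (fun v => t ≤ v)).Nonempty) : t ≤ nextSupp u t := by
  rw [nextSupp, dif_pos hE]
  exact (Finset.mem_filter.mp (Finset.min'_mem _ hE)).2

lemma nextSupp_le {v : Fin n} (hv : v ∈ u.support) (htv : t ≤ v) : nextSupp u t ≤ v := by
  have hE : (u.support.filter (fun v => t ≤ v)).Nonempty := ⟨v, Finset.mem_filter.mpr ⟨hv, htv⟩⟩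
  rw [nextSupp, dif_pos hE]
  exact Finset.min'_le _ _ (Finset.mem_filter.mpr ⟨hv, htv⟩)

lemma InGap.lt_nextSupp (ht : InGap u t) : t < nextSupp u t :=
  lt_of_le_of_ne (le_nextSupp ht.nonempty) fun h => ht.not_mem (h ▸ nextSupp_mem ht.nonempty)

lemma cFun_eq (hE : (u.support.filter (fun v => t ≤ v)).Nonempty) :
    cFun u t = u + Finsupp.single t 1 - Finsupp.single (nextSupp u t) 1 := by
  rw [cFun, dif_pos hE, nextSupp, dif_pos hE]

lemma add_single_sub_cFun (hE : (u.support.filter (fun v => t ≤ v)).Nonempty) :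
    u + Finsupp.single t 1 - cFun u t = Finsupp.single (nextSupp u t) 1 := by
  rw [cFun_eq hE]
  apply tsub_tsub_cancel_of_le
  rw [Finsupp.single_le_iff, Finsupp.add_apply]
  have := Finsupp.mem_support_iff.mp (nextSupp_mem hE)
  omega

lemma cFun_apply (hu : SqFreeDeg d u) (ht : InGap u t) (a : Fin n) :
    cFun u t a = if a ∈ insert t (u.support.erase (nextSupp u t)) then 1 else 0 := by
  have hσ : nextSupp u t ∈ u.support := nextSupp_mem ht.nonempty
  have hσt : nextSupp u t ≠ t := (ht.lt_nextSupp).ne'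
  have hσ1 := hu.apply_eq (nextSupp u t)
  have hua := hu.apply_eq a
  have hut : u t = 0 := Finsupp.notMem_support_iff.mp ht.not_mem
  rw [if_pos hσ] at hσ1
  rw [cFun_eq ht.nonempty, Finsupp.tsub_apply, Finsupp.add_apply, Finsupp.single_apply,
    Finsupp.single_apply]
  simp only [Finset.mem_insert, Finset.mem_erase]
  by_cases h1 : a = t <;> by_cases h2 : a = nextSupp u t <;> by_cases h3 : a ∈ u.support <;>
    simp_all [eq_comm]

lemma support_cFun (hu : SqFreeDeg d u) (ht : InGap u t) :
    (cFun u t).support = insert t (u.support.erase (nextSupp u t)) := by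
  ext a
  rw [Finsupp.mem_support_iff, cFun_apply hu ht]
  split_ifs <;> simp_all

lemma SqFreeDeg.cFun (hu : SqFreeDeg d u) (ht : InGap u t) : SqFreeDeg d (cFun u t) := by
  refine ⟨fun a => by rw [cFun_apply hu ht]; split <;> omega, ?_⟩
  rw [support_cFun hu ht, Finset.card_insert_of_notMem
    (fun h => ht.not_mem (Finset.mem_of_mem_erase h)),
    Finset.card_erase_of_mem (nextSupp_mem ht.nonempty), hu.2]
  have : 0 < d := hu.2 ▸ Finset.card_pos.mpr ⟨_, nextSupp_mem ht.nonempty⟩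
  omega

lemma lexGt_cFun (hu : SqFreeDeg d u) (ht : InGap u t) : lexGt (cFun u t) u := by
  refine ⟨t, fun a ha => ?_, ?_⟩
  · have hσ : a ≠ nextSupp u t := (ha.trans ht.lt_nextSupp).ne
    rw [cFun_apply hu ht, hu.apply_eq]
    simp [ha.ne, hσ]
  · rw [cFun_apply hu ht, hu.apply_eq, if_neg ht.not_mem, if_pos (Finset.mem_insert_self _ _)]
    omega

lemma gapIndex_mono (hst : s ≤ t) : gapIndex u s ≤ gapIndex u t :=
  Finset.card_le_card (Finset.monotone_filter_right _ fun _ _ h => lt_of_lt_of_le h hst)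

lemma gapIndex_lt (hu : SqFreeDeg d u) (hE : (u.support.filter (fun v => t ≤ v)).Nonempty) :
    gapIndex u t < d := by
  rw [gapIndex, ← hu.2]
  refine Finset.card_lt_card ⟨Finset.filter_subset _ _, fun hsub => ?_⟩
  exact (Finset.mem_filter.mp (hsub (nextSupp_mem hE))).2.not_ge (le_nextSupp hE)

lemma exists_mem_support_of_gapIndex_lt (h : gapIndex u s < gapIndex u t) :
    ∃ v ∈ u.support, s ≤ v ∧ v < t := by
  obtain ⟨v, hvt, hvs⟩ := Finset.not_subset.mp fun hsub => h.not_ge (Finset.card_le_card hsub)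
  rw [Finset.mem_filter] at hvt hvs
  exact ⟨v, hvt.1, not_lt.mp fun h => hvs ⟨hvt.1, h⟩, hvt.2⟩

lemma nextSupp_lt_of_gapIndex_lt (h : gapIndex u s < gapIndex u t) : nextSupp u s < t := by
  obtain ⟨v, hv, hsv, hvt⟩ := exists_mem_support_of_gapIndex_lt h
  exact lt_of_le_of_lt (nextSupp_le hv hsv) hvt

lemma le_of_gapIndex_eq (hlc : gapIndex u t = gapIndex u s) (hts : t < s) {v : Fin n}
    (hv : v ∈ u.support) (htv : t ≤ v) : s ≤ v := by
  by_contra hvs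
  have hfeq : u.support.filter (fun v => v < t) = u.support.filter (fun v => v < s) :=
    Finset.eq_of_subset_of_card_le
      (Finset.monotone_filter_right _ fun _ _ ha => lt_trans ha hts) hlc.symm.le
  have : v ∈ u.support.filter (fun v => v < s) := Finset.mem_filter.mpr ⟨hv, not_le.mp hvs⟩
  rw [← hfeq, Finset.mem_filter] at this
  exact this.2.not_ge htv

lemma nextSupp_eq_of_gapIndex_eq (hEs : (u.support.filter (fun v => s ≤ v)).Nonempty)
    (hEt : (u.support.filter (fun v => t ≤ v)).Nonempty)
    (hlc : gapIndex u t = gapIndex u s) (hts : t < s) :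
    nextSupp u t = nextSupp u s :=
  le_antisymm (nextSupp_le (nextSupp_mem hEs) (hts.le.trans (le_nextSupp hEs)))
    (nextSupp_le (nextSupp_mem hEt)
      (le_of_gapIndex_eq hlc hts (nextSupp_mem hEt) (le_nextSupp hEt)))

lemma nextSupp_lt_iff (hEs : (u.support.filter (fun v => s ≤ v)).Nonempty)
    (hkey : gapIndex u t = gapIndex u s → t < s) : nextSupp u s < t ↔ s < t := by
  refine ⟨(le_nextSupp hEs).trans_lt, fun hst => nextSupp_lt_of_gapIndex_lt ?_⟩
  exact lt_of_le_of_ne (gapIndex_mono hst.le) fun h => (hkey h.symm).not_gt hst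

lemma gapIndex_cFun (hu : SqFreeDeg d u) (hs : InGap u s)
    (hkey : gapIndex u t = gapIndex u s → t < s) :
    gapIndex (cFun u s) t = gapIndex u t := by
  have hσ := nextSupp_mem hs.nonempty
  have hiff := nextSupp_lt_iff hs.nonempty hkey
  rw [gapIndex, support_cFun hu hs, Finset.filter_insert, Finset.filter_erase]
  by_cases hst : s < t
  · have hσt : nextSupp u s ∈ u.support.filter (fun v => v < t) :=
      Finset.mem_filter.mpr ⟨hσ, hiff.mpr hst⟩
    rw [if_pos hst, Finset.card_insert_of_notMem
      (fun h => hs.not_mem (Finset.mem_filter.mp (Finset.mem_of_mem_erase h)).1),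
      Finset.card_erase_of_mem hσt, gapIndex]
    have := Finset.card_pos.mpr ⟨_, hσt⟩
    omega
  · rw [if_neg hst, Finset.erase_eq_of_notMem (s := u.support.filter (fun v => v < t))
      fun h => hst (hiff.mp (Finset.mem_filter.mp h).2), gapIndex]

lemma nextSupp_ne_of_gapIndex_ne (hs : InGap u s) (ht : InGap u t) (hne : t ≠ s)
    (hlc : gapIndex u t ≠ gapIndex u s) : nextSupp u t ≠ nextSupp u s := by
  rcases lt_or_gt_of_ne hne with hts | hst
  · exact ((nextSupp_lt_of_gapIndex_lt (lt_of_le_of_ne (gapIndex_mono hts.le) hlc)).trans_le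
      (le_nextSupp hs.nonempty)).ne
  · exact (((nextSupp_lt_iff hs.nonempty fun h => absurd h hlc).mpr hst).trans_le
      (le_nextSupp ht.nonempty)).ne'

lemma inGap_cFun (hu : SqFreeDeg d u) (hs : InGap u s) (ht : InGap u t) (hne : t ≠ s)
    (hkey : gapIndex u t = gapIndex u s → t < s) : InGap (cFun u s) t := by
  refine ⟨?_, ?_⟩
  · rw [support_cFun hu hs, Finset.mem_insert, not_or]
    exact ⟨hne, fun h => ht.not_mem (Finset.mem_of_mem_erase h)⟩
  by_cases hlc : gapIndex u t = gapIndex u s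
  · refine ⟨s, Finset.mem_filter.mpr ⟨?_, (hkey hlc).le⟩⟩
    rw [support_cFun hu hs]
    exact Finset.mem_insert_self _ _
  · refine ⟨nextSupp u t, Finset.mem_filter.mpr ⟨?_, le_nextSupp ht.nonempty⟩⟩
    rw [support_cFun hu hs]
    exact Finset.mem_insert_of_mem (Finset.mem_erase.mpr
      ⟨nextSupp_ne_of_gapIndex_ne hs ht hne hlc, nextSupp_mem ht.nonempty⟩)

lemma nextSupp_cFun_of_gapIndex_eq (hu : SqFreeDeg d u) (hs : InGap u s) (ht : InGap u t)
    (hlc : gapIndex u t = gapIndex u s) (hts : t < s) : nextSupp (cFun u s) t = s := by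
  have ht' := inGap_cFun hu hs ht hts.ne fun _ => hts
  have hsmem : s ∈ (cFun u s).support := by
    rw [support_cFun hu hs]; exact Finset.mem_insert_self _ _
  refine le_antisymm (nextSupp_le hsmem hts.le) ?_
  have hmem := nextSupp_mem ht'.nonempty
  rw [support_cFun hu hs, Finset.mem_insert] at hmem
  rcases hmem with h | h
  · exact h.ge
  · exact le_of_gapIndex_eq hlc hts (Finset.mem_of_mem_erase h) (le_nextSupp ht'.nonempty)

lemma nextSupp_cFun_of_gapIndex_ne (hu : SqFreeDeg d u) (hs : InGap u s) (ht : InGap u t)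
    (hne : t ≠ s) (hlc : gapIndex u t ≠ gapIndex u s) :
    nextSupp (cFun u s) t = nextSupp u t := by
  have ht' := inGap_cFun hu hs ht hne fun h => absurd h hlc
  have hσ : nextSupp u t ∈ (cFun u s).support := by
    rw [support_cFun hu hs]
    exact Finset.mem_insert_of_mem (Finset.mem_erase.mpr
      ⟨nextSupp_ne_of_gapIndex_ne hs ht hne hlc, nextSupp_mem ht.nonempty⟩)
  refine le_antisymm (nextSupp_le hσ (le_nextSupp ht.nonempty)) ?_
  have hmem := nextSupp_mem ht'.nonempty
  have hle := le_nextSupp ht'.nonempty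
  rw [support_cFun hu hs, Finset.mem_insert] at hmem
  rcases hmem with h | h
  · rw [h] at hle ⊢
    exact (nextSupp_lt_of_gapIndex_lt
      (lt_of_le_of_ne (gapIndex_mono hle) hlc)).le
  · exact nextSupp_le (Finset.mem_of_mem_erase h) hle

lemma cFun_cFun_of_gapIndex_eq (hu : SqFreeDeg d u) (hs : InGap u s) (ht : InGap u t)
    (hlc : gapIndex u t = gapIndex u s) (hts : t < s) :
    cFun (cFun u s) t = cFun u t := by
  have ht' := inGap_cFun hu hs ht hts.ne fun _ => hts
  refine ((hu.cFun hs).cFun ht').eq_of_support_eq (hu.cFun ht) ?_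
  rw [support_cFun (hu.cFun hs) ht', support_cFun hu ht,
    nextSupp_cFun_of_gapIndex_eq hu hs ht hlc hts, support_cFun hu hs,
    Finset.erase_insert fun h => hs.not_mem (Finset.mem_of_mem_erase h),
    nextSupp_eq_of_gapIndex_eq hs.nonempty ht.nonempty hlc hts]

lemma cFun_cFun_comm (hu : SqFreeDeg d u) (hs : InGap u s) (ht : InGap u t) (hne : t ≠ s)
    (hlc : gapIndex u t ≠ gapIndex u s) :
    cFun (cFun u s) t = cFun (cFun u t) s := by
  have hsupp : ∀ {s t : Fin n}, InGap u s → InGap u t → t ≠ s → gapIndex u t ≠ gapIndex u s →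
      (cFun (cFun u s) t).support =
        insert t (insert s ((u.support.erase (nextSupp u s)).erase (nextSupp u t))) := by
    intro s t hs ht hne hlc
    rw [support_cFun (hu.cFun hs) (inGap_cFun hu hs ht hne fun h => absurd h hlc),
      nextSupp_cFun_of_gapIndex_ne hu hs ht hne hlc, support_cFun hu hs,
      Finset.erase_insert_of_ne fun h => hs.not_mem (by rw [h]; exact nextSupp_mem ht.nonempty)]
  refine ((hu.cFun hs).cFun (inGap_cFun hu hs ht hne fun h => absurd h hlc)).eq_of_support_eq
    ((hu.cFun ht).cFun (inGap_cFun hu ht hs hne.symm fun h => absurd h.symm hlc)) ?_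
  rw [hsupp hs ht hne hlc, hsupp ht hs hne.symm (Ne.symm hlc), Finset.insert_comm,
    Finset.erase_right_comm]

end NextSupp

lemma Finset.orderEmbOfFin_lt_iff {α : Type*} [LinearOrder α] {s : Finset α} {D : ℕ}
    (h : s.card = D) (r : Fin D) (x : α) :
    s.orderEmbOfFin h r < x ↔ (r : ℕ) < (s.filter (· < x)).card := by
  set f := s.orderEmbOfFin h
  have hrank : (s.filter (fun y => y < f r)).card = r := by
    have : s.filter (fun y => y < f r) = (Finset.Iio r).image f := by
      ext y
      simp only [Finset.mem_filter, Finset.mem_image, Finset.mem_Iio]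
      constructor
      · rintro ⟨hy, hlt⟩
        obtain ⟨i, rfl⟩ : y ∈ Set.range f := by rw [Finset.range_orderEmbOfFin]; exact hy
        exact ⟨i, f.lt_iff_lt.mp hlt, rfl⟩
      · rintro ⟨i, hi, rfl⟩
        exact ⟨s.orderEmbOfFin_mem h i, f.lt_iff_lt.mpr hi⟩
    rw [this, Finset.card_image_of_injective _ f.injective, Fin.card_Iio]
  constructor
  · intro hlt
    rw [← hrank]
    refine Finset.card_lt_card ⟨Finset.monotone_filter_right _ fun _ _ hy => hy.trans hlt, ?_⟩
    intro hsub
    exact lt_irrefl _ (Finset.mem_filter.mp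
      (hsub (Finset.mem_filter.mpr ⟨s.orderEmbOfFin_mem h r, hlt⟩))).2
  · intro hr
    by_contra hle
    have : (s.filter (· < x)).card ≤ (s.filter (fun y => y < f r)).card :=
      Finset.card_le_card (Finset.monotone_filter_right s fun _ _ hy => hy.trans_le (not_lt.mp hle))
    omega

/-- The support elements below `t`, followed by `t`: the indices `j_1 < ⋯ < j_{ℓ+1}` of the
cointerval exchange that turns `u` into `c(x_t·u)`. -/
noncomputable def gapSeq (u : Fin n →₀ ℕ) (hu : u.support.card = d) (t : Fin n) :
    Fin (gapIndex u t + 1) → Fin n :=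
  fun r => if hr : (r : ℕ) < gapIndex u t then
    u.support.orderEmbOfFin hu ⟨r, hr.trans_le (hu ▸ Finset.card_filter_le _ _)⟩ else t

section CointervalExchange

variable {u : Fin n →₀ ℕ} {t : Fin n}

lemma vecOfFin_orderEmbOfFin (hu : SqFreeDeg d u) :
    vecOfFin (u.support.orderEmbOfFin hu.2) = u := by
  rw [vecOfFin, ← Finset.sum_image (f := fun a => Finsupp.single a 1)
      fun _ _ _ _ h => (u.support.orderEmbOfFin hu.2).injective h,
    Finset.image_orderEmbOfFin_univ, hu.sum_single_support]

lemma orderEmbOfFin_gapIndex (hu : SqFreeDeg d u) (ht : InGap u t) :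
    u.support.orderEmbOfFin hu.2 ⟨gapIndex u t, gapIndex_lt hu ht.nonempty⟩ = nextSupp u t := by
  set f := u.support.orderEmbOfFin hu.2
  have hlt : ∀ r, f r < t ↔ (r : ℕ) < gapIndex u t :=
    fun r => u.support.orderEmbOfFin_lt_iff hu.2 r t
  obtain ⟨r, hr⟩ : nextSupp u t ∈ Set.range f := by
    rw [Finset.range_orderEmbOfFin]; exact nextSupp_mem ht.nonempty
  have hlr : ¬ (r : ℕ) < gapIndex u t := by
    rw [← hlt, hr]; exact not_lt.mpr (le_nextSupp ht.nonempty)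
  refine le_antisymm (hr ▸ f.monotone (Fin.le_def.mpr (not_lt.mp hlr))) ?_
  exact nextSupp_le (u.support.orderEmbOfFin_mem hu.2 _)
    (not_lt.mp fun h => lt_irrefl _ ((hlt _).mp h))

lemma gapSeq_of_lt (hu : SqFreeDeg d u) (ht : InGap u t) {r : Fin (gapIndex u t + 1)}
    (hr : (r : ℕ) < gapIndex u t) :
    gapSeq u hu.2 t r =
      u.support.orderEmbOfFin hu.2 ⟨r, hr.trans (gapIndex_lt hu ht.nonempty)⟩ :=
  dif_pos hr

lemma gapSeq_of_not_lt (hu : SqFreeDeg d u) {r : Fin (gapIndex u t + 1)}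
    (hr : ¬ (r : ℕ) < gapIndex u t) : gapSeq u hu.2 t r = t :=
  dif_neg hr

lemma gapSeq_le (hu : SqFreeDeg d u) (ht : InGap u t) (r : Fin (gapIndex u t + 1)) :
    gapSeq u hu.2 t r ≤ t := by
  by_cases hr : (r : ℕ) < gapIndex u t
  · rw [gapSeq_of_lt hu ht hr]
    exact ((u.support.orderEmbOfFin_lt_iff hu.2 _ t).mpr hr).le
  · rw [gapSeq_of_not_lt hu hr]

lemma gapSeq_strictMono (hu : SqFreeDeg d u) (ht : InGap u t) : StrictMono (gapSeq u hu.2 t) := by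
  intro r₁ r₂ h
  have h' : (r₁ : ℕ) < r₂ := h
  have hr₁ : (r₁ : ℕ) < gapIndex u t := by have := r₂.2; omega
  rw [gapSeq_of_lt hu ht hr₁]
  by_cases hr₂ : (r₂ : ℕ) < gapIndex u t
  · rw [gapSeq_of_lt hu ht hr₂]
    exact (u.support.orderEmbOfFin hu.2).strictMono (Fin.mk_lt_mk.mpr h')
  · rw [gapSeq_of_not_lt hu hr₂]
    exact (u.support.orderEmbOfFin_lt_iff hu.2 _ t).mpr hr₁

lemma gapSeq_le_orderEmbOfFin (hu : SqFreeDeg d u) (ht : InGap u t)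
    (r : Fin (gapIndex u t + 1)) :
    gapSeq u hu.2 t r ≤
      u.support.orderEmbOfFin hu.2 (Fin.castLE (gapIndex_lt hu ht.nonempty) r) := by
  by_cases hr : (r : ℕ) < gapIndex u t
  · rw [gapSeq_of_lt hu ht hr]; rfl
  · have hcast : Fin.castLE (gapIndex_lt hu ht.nonempty) r =
        ⟨gapIndex u t, gapIndex_lt hu ht.nonempty⟩ := by
      ext; simp only [Fin.val_castLE]; have := r.2; omega
    rw [gapSeq_of_not_lt hu hr, hcast, orderEmbOfFin_gapIndex hu ht]
    exact le_nextSupp ht.nonempty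

lemma nextSupp_lt_orderEmbOfFin (hu : SqFreeDeg d u) (ht : InGap u t) {r : Fin d}
    (hr : gapIndex u t + 1 ≤ r) : nextSupp u t < u.support.orderEmbOfFin hu.2 r := by
  rw [← orderEmbOfFin_gapIndex hu ht]
  exact (u.support.orderEmbOfFin hu.2).strictMono (Fin.mk_lt_mk.mpr hr)

lemma image_gapSeq (hu : SqFreeDeg d u) (ht : InGap u t) :
    Finset.univ.image (gapSeq u hu.2 t) = insert t (u.support.filter (· < t)) := by
  set f := u.support.orderEmbOfFin hu.2
  ext y
  simp only [Finset.mem_image, Finset.mem_univ, true_and, Finset.mem_insert, Finset.mem_filter]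
  constructor
  · rintro ⟨r, rfl⟩
    by_cases hr : (r : ℕ) < gapIndex u t
    · rw [gapSeq_of_lt hu ht hr]
      exact Or.inr ⟨u.support.orderEmbOfFin_mem hu.2 _,
        (u.support.orderEmbOfFin_lt_iff hu.2 _ t).mpr hr⟩
    · exact Or.inl (gapSeq_of_not_lt hu hr)
  · rintro (rfl | ⟨hy, hyt⟩)
    · exact ⟨Fin.last _, gapSeq_of_not_lt hu (by simp)⟩
    · obtain ⟨r, rfl⟩ : y ∈ Set.range f := by rw [Finset.range_orderEmbOfFin]; exact hy
      have hr : (r : ℕ) < gapIndex u t := (u.support.orderEmbOfFin_lt_iff hu.2 r t).mp hyt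
      exact ⟨⟨r, by omega⟩, gapSeq_of_lt hu ht (r := ⟨r, by omega⟩) hr⟩

lemma image_orderEmbOfFin_gt_gapIndex (hu : SqFreeDeg d u) (ht : InGap u t) :
    (Finset.univ.filter (fun r : Fin d => gapIndex u t + 1 ≤ r)).image
        (u.support.orderEmbOfFin hu.2) =
      u.support.filter (nextSupp u t < ·) := by
  set f := u.support.orderEmbOfFin hu.2
  ext y
  simp only [Finset.mem_image, Finset.mem_filter, Finset.mem_univ, true_and]
  constructor
  · rintro ⟨r, hr, rfl⟩
    exact ⟨u.support.orderEmbOfFin_mem hu.2 r, nextSupp_lt_orderEmbOfFin hu ht hr⟩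
  · rintro ⟨hy, hσy⟩
    obtain ⟨r, rfl⟩ : y ∈ Set.range f := by rw [Finset.range_orderEmbOfFin]; exact hy
    rw [← orderEmbOfFin_gapIndex hu ht] at hσy
    exact ⟨r, Fin.mk_lt_mk.mp (f.lt_iff_lt.mp hσy), rfl⟩

lemma support_cFun_eq_union (hu : SqFreeDeg d u) (ht : InGap u t) :
    (cFun u t).support =
      insert t (u.support.filter (· < t)) ∪ u.support.filter (nextSupp u t < ·) := by
  rw [support_cFun hu ht, Finset.insert_union]
  congr 1
  ext a
  simp only [Finset.mem_erase, Finset.mem_union, Finset.mem_filter]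
  constructor
  · rintro ⟨hne, ha⟩
    rcases lt_or_ge a t with hat | hat
    · exact Or.inl ⟨ha, hat⟩
    · exact Or.inr ⟨ha, lt_of_le_of_ne (nextSupp_le ha hat) (Ne.symm hne)⟩
  · rintro (⟨ha, hat⟩ | ⟨ha, hσa⟩)
    · exact ⟨(hat.trans_le (le_nextSupp ht.nonempty)).ne, ha⟩
    · exact ⟨hσa.ne', ha⟩

lemma disjoint_gapSeq_image (ht : InGap u t) :
    Disjoint (insert t (u.support.filter (· < t))) (u.support.filter (nextSupp u t < ·)) := by
  rw [Finset.disjoint_left]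
  intro a ha hb
  have hσa := (Finset.mem_filter.mp hb).2
  rcases Finset.mem_insert.mp ha with rfl | ha
  · exact hσa.not_gt ht.lt_nextSupp
  · exact hσa.not_gt ((Finset.mem_filter.mp ha).2.trans ht.lt_nextSupp)

lemma cFun_mem_of_cointerval {I : Ideal (MvPolynomial (Fin n) K)} (hco : CointervalIdeal K d I)
    (hu : SqFreeDeg d u) (hmem : monomial u (1 : K) ∈ I) (ht : InGap u t) :
    monomial (cFun u t) (1 : K) ∈ I := by
  set f := u.support.orderEmbOfFin hu.2
  have hexch := hco f f.strictMono (by rwa [vecOfFin_orderEmbOfFin hu]) _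
    (gapIndex_lt hu ht.nonempty) (gapSeq u hu.2 t) (gapSeq_strictMono hu ht)
    (gapSeq_le_orderEmbOfFin hu ht)
    (fun s r hr => ((gapSeq_le hu ht s).trans_lt ((le_nextSupp ht.nonempty).trans_lt
      (nextSupp_lt_orderEmbOfFin hu ht hr))).ne)
  convert hexch using 2
  rw [← Finset.sum_image (f := fun a => Finsupp.single a 1)
      fun _ _ _ _ h => (gapSeq_strictMono hu ht).injective h,
    ← Finset.sum_image (f := fun a => Finsupp.single a 1) fun _ _ _ _ h => f.injective h,
    image_gapSeq hu ht, image_orderEmbOfFin_gt_gapIndex hu ht,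
    ← Finset.sum_union (disjoint_gapSeq_image ht), ← support_cFun_eq_union hu ht,
    (hu.cFun ht).sum_single_support]

end CointervalExchange

lemma inGap_of_le_add_single {u v : Fin n →₀ ℕ} {t : Fin n} (hu : SqFreeDeg d u)
    (hv : SqFreeDeg d v) (hle : v ≤ u + Finsupp.single t 1) (hlex : lexGt v u) : InGap u t := by
  have hne : v ≠ u := fun h => lexGt_irrefl u (h ▸ hlex)
  have hle_at : ∀ a, v a ≤ u a + if t = a then 1 else 0 := fun a => by
    simpa [Finsupp.single_apply] using hle a
  have hnot : t ∉ u.support := by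
    intro htu
    refine hne (hv.eq_of_le hu fun a => ?_)
    by_cases hta : t = a
    · subst hta
      have := hu.apply_eq t
      rw [if_pos htu] at this
      have := hv.1 t
      omega
    · simpa [hta] using hle_at a
  refine ⟨hnot, Finset.nonempty_iff_ne_empty.mpr fun hempty => ?_⟩
  have hbelow : ∀ a ∈ u.support, a < t := fun a ha =>
    not_le.mp fun hta => Finset.eq_empty_iff_forall_notMem.mp hempty a
      (Finset.mem_filter.mpr ⟨ha, hta⟩)
  obtain ⟨w, hagree, hlt⟩ := hlex
  have hwt : w = t := by
    have := hle_at w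
    split_ifs at this with h
    · exact h.symm
    · omega
  subst hwt
  have hsub : insert w u.support ⊆ v.support := by
    intro a ha
    rcases Finset.mem_insert.mp ha with rfl | ha
    · exact Finsupp.mem_support_iff.mpr (by omega)
    · exact Finsupp.mem_support_iff.mpr
        ((hagree a (hbelow a ha)).symm ▸ Finsupp.mem_support_iff.mp ha)
  have := Finset.card_le_card hsub
  rw [Finset.card_insert_of_notMem hnot, hu.2, hv.2] at this
  omega

section Generators

variable {m : Fin k → (Fin n →₀ ℕ)}

lemma lt_of_lexGt (hlex : LexDec m) {i j : Fin k} (h : lexGt (m i) (m j)) : i < j := by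
  rcases lt_trichotomy i j with hij | rfl | hji
  · exact hij
  · exact absurd h (lexGt_irrefl _)
  · exact absurd h (lexGt_asymm (hlex j i hji))

lemma mem_mset_iff_inGap (hsf : ∀ j, SqFreeDeg d (m j)) (hlex : LexDec m)
    (hco : CointervalIdeal K d (genIdeal K (Set.range m))) {j : Fin k} {t : Fin n} :
    t ∈ mset K m j ↔ InGap (m j) t := by
  rw [mem_mset_iff, monomial_mem_genIdeal_iff]
  constructor
  · rintro ⟨_, ⟨i, hij, rfl⟩, hle⟩
    exact inGap_of_le_add_single (hsf j) (hsf i) hle (hlex i j hij)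
  · intro ht
    obtain ⟨i, hi⟩ := exists_eq_of_monomial_mem hsf ((hsf j).cFun ht)
      (cFun_mem_of_cointerval hco (hsf j) (monomial_mem_genIdeal_range j) ht)
    refine ⟨m i, ⟨i, lt_of_lexGt hlex (hi ▸ lexGt_cFun (hsf j) ht), rfl⟩, ?_⟩
    rw [hi, cFun_eq ht.nonempty]
    exact tsub_le_self

lemma exists_index_cFun (hsf : ∀ j, SqFreeDeg d (m j))
    (hco : CointervalIdeal K d (genIdeal K (Set.range m))) (j : Fin k) :
    ∃ g : Fin n → Fin k, ∀ t, InGap (m j) t → m (g t) = cFun (m j) t := by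
  have hex : ∀ t, InGap (m j) t → ∃ i, m i = cFun (m j) t := fun t ht =>
    exists_eq_of_monomial_mem hsf ((hsf j).cFun ht)
      (cFun_mem_of_cointerval hco (hsf j) (monomial_mem_genIdeal_range j) ht)
  have : Nonempty (Fin k) := ⟨j⟩
  choose! g hg using hex
  exact ⟨g, hg⟩

def IsGapMax (u : Fin n →₀ ℕ) (α : Finset (Fin n)) (t : Fin n) : Prop :=
  ∀ s ∈ α, gapIndex u s = gapIndex u t → s ≤ t

lemma TFin_eq_filter_isGapMax (hsf : ∀ j, SqFreeDeg d (m j)) (hlex : LexDec m)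
    (hco : CointervalIdeal K d (genIdeal K (Set.range m))) {j : Fin k} {β : Finset (Fin n)}
    (hβ : ↑β ⊆ mset K m j) :
    TFin K d m (m j) β = β.filter (IsGapMax (m j) β) := by
  have hgap : ∀ s ∈ β, InGap (m j) s := fun s hs => (mem_mset_iff_inGap hsf hlex hco).mp (hβ hs)
  have hA : ∀ s ∈ β, inA K m (m j) s (gapIndex (m j) s) := fun s hs =>
    ⟨rfl, (hgap s hs).not_mem,
      cFun_mem_of_cointerval hco (hsf j) (monomial_mem_genIdeal_range j) (hgap s hs)⟩
  ext t
  simp only [TFin, IsGapMax, Finset.mem_filter, and_congr_right_iff]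
  intro ht
  constructor
  · rintro ⟨l, ⟨hl, -, -⟩, hmax⟩ s hs hlc
    have := hA s hs
    rw [hlc, gapIndex, hl] at this
    exact hmax s hs this
  · intro hmax
    refine ⟨⟨gapIndex (m j) t, gapIndex_lt (hsf j) (hgap t ht).nonempty⟩, hA t ht, ?_⟩
    rintro s hs ⟨hl, -, -⟩
    exact hmax s hs hl

end Generators

section IsGapMax

variable {u : Fin n →₀ ℕ} {α : Finset (Fin n)} {r s t : Fin n}

lemma IsGapMax.lt_of_gapIndex_eq (ht : IsGapMax u α t) (hr : r ∈ α) (hne : r ≠ t) :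
    gapIndex u r = gapIndex u t → r < t :=
  fun h => lt_of_le_of_ne (ht r hr h) hne

lemma IsGapMax.erase (ht : IsGapMax u α t) (s : Fin n) : IsGapMax u (α.erase s) t :=
  fun r hr => ht r (Finset.mem_of_mem_erase hr)

lemma isGapMax_erase_iff_of_gapIndex_ne (hlc : gapIndex u s ≠ gapIndex u t) :
    IsGapMax u (α.erase s) t ↔ IsGapMax u α t := by
  refine ⟨fun h r hr hrt => ?_, fun h => h.erase s⟩
  exact h r (Finset.mem_erase.mpr ⟨by rintro rfl; exact hlc hrt, hr⟩) hrt

lemma isGapMax_erase_iff_of_le (hst : s ≤ t) : IsGapMax u (α.erase s) t ↔ IsGapMax u α t := by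
  refine ⟨fun h r hr hrt => ?_, fun h => h.erase s⟩
  by_cases hrs : r = s
  · exact hrs ▸ hst
  · exact h r (Finset.mem_erase.mpr ⟨hrs, hr⟩) hrt

lemma not_isGapMax_of_lt (ht : t ∈ α) (hlc : gapIndex u t = gapIndex u s) (hst : s < t) :
    ¬ IsGapMax u α s :=
  fun h => (h t ht hlc).not_gt hst

lemma IsGapMax.of_erase (hs : IsGapMax u (α.erase t) s) (hlc : gapIndex u s = gapIndex u t)
    (hst : s < t) : IsGapMax u α t := by
  intro r hr hrt
  by_cases hrt' : r = t
  · exact hrt'.le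
  · exact (hs r (Finset.mem_erase.mpr ⟨hrt', hr⟩) (hrt.trans hlc.symm)).trans hst.le

end IsGapMax

lemma eps_erase_add {α : Finset (Fin n)} {t s : Fin n} (ht : t ∈ α) :
    eps (α.erase t) s + (if t < s then 1 else 0) = eps α s := by
  rw [eps, eps, Finset.filter_erase]
  split_ifs with h
  · have hmem : t ∈ α.filter (· < s) := Finset.mem_filter.mpr ⟨ht, h⟩
    rw [Finset.card_erase_of_mem hmem]
    have := Finset.card_pos.mpr ⟨t, hmem⟩
    omega
  · rw [Finset.erase_eq_of_notMem (s := α.filter (· < s)) fun hc => h (Finset.mem_filter.mp hc).2,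
      add_zero]

lemma neg_one_pow_eps_mul_eps_erase {R : Type*} [CommRing R] {α : Finset (Fin n)} {t s : Fin n}
    (ht : t ∈ α) (hs : s ∈ α) (hne : s ≠ t) :
    (-1 : R) ^ eps α t * (-1) ^ eps (α.erase t) s =
      -((-1) ^ eps α s * (-1) ^ eps (α.erase s) t) := by
  rw [← eps_erase_add (s := t) hs, ← eps_erase_add (s := s) ht]
  rcases lt_or_gt_of_ne hne with h | h
  · rw [if_pos h, if_neg (asymm h)]; ring
  · rw [if_neg (asymm h), if_pos h]; ring

lemma symOfVec_eq_symIdx {m : Fin k → (Fin n →₀ ℕ)} (hlex : LexDec m) (i : Fin k)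
    (β : Finset (Fin n)) : symOfVec K m (m i) β = symIdx K m i β := by
  rw [symOfVec, symIdx, Finset.sum_eq_single i]
  · by_cases h : ↑β ⊆ mset K m i <;> simp [h]
  · intro i' _ hi'
    rw [if_neg fun hc => hi' (hlex.injective hc.1)]
  · exact fun h => absurd (Finset.mem_univ i) h

/- The summands of `ψ(d_K(m_j;α))` and `d(ψ(m_j;α))`, indexed by the ordered pair `(t, s)` of
elements removed from `α`, `t` first; `g t` is the index of the generator `c(x_t·m_j)`. -/

section Summands

variable (K) (m : Fin k → (Fin n →₀ ℕ)) (g : Fin n → Fin k) (j : Fin k) (α : Finset (Fin n))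

noncomputable def psiDKTerm (t s : Fin n) : BigFree K n k :=
  (((-1 : MvPolynomial (Fin n) K) ^ eps α t * X t) *
      ((-1) ^ eps (α.erase t) s * X (nextSupp (m j) s))) •
    symIdx K m (g s) ((α.erase t).erase s)

noncomputable def dKoszulTerm (t s : Fin n) : BigFree K n k :=
  (((-1 : MvPolynomial (Fin n) K) ^ eps α t * X (nextSupp (m j) t)) *
      ((-1) ^ (eps (α.erase t) s + 1) * X s)) •
    symIdx K m (g t) ((α.erase t).erase s)

noncomputable def dSwapTerm (t s : Fin n) : BigFree K n k :=
  (((-1 : MvPolynomial (Fin n) K) ^ eps α t * X (nextSupp (m j) t)) *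
      ((-1) ^ eps (α.erase t) s * X (nextSupp (m (g t)) s))) •
    symOfVec K m (cFun (m (g t)) s) ((α.erase t).erase s)

noncomputable def psiDKSummand (t s : Fin n) : BigFree K n k :=
  if IsGapMax (m j) (α.erase t) s then psiDKTerm K m g j α t s else 0

noncomputable def dPsiSummand (t s : Fin n) : BigFree K n k :=
  if IsGapMax (m j) α t then
    dKoszulTerm K m g j α t s +
      if IsGapMax (m j) (α.erase t) s then dSwapTerm K m g j α t s else 0
  else 0

end Summands

section PairCancellation

variable {m : Fin k → (Fin n →₀ ℕ)} {g : Fin n → Fin k} {j : Fin k} {α : Finset (Fin n)}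
  {s t : Fin n}

lemma psiDKTerm_eq_dKoszulTerm (ht : t ∈ α) (hs : s ∈ α) (hne : s ≠ t) :
    psiDKTerm K m g j α t s = dKoszulTerm K m g j α s t := by
  rw [psiDKTerm, dKoszulTerm, Finset.erase_right_comm]
  congr 1
  linear_combination (X t * X (nextSupp (m j) s) : MvPolynomial (Fin n) K) *
    neg_one_pow_eps_mul_eps_erase (R := MvPolynomial (Fin n) K) ht hs hne

lemma dSwapTerm_add_dSwapTerm (hu : SqFreeDeg d (m j)) (hg : ∀ t ∈ α, m (g t) = cFun (m j) t)
    (ht : t ∈ α) (hs : s ∈ α) (htg : InGap (m j) t) (hsg : InGap (m j) s) (hne : s ≠ t)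
    (hlc : gapIndex (m j) s ≠ gapIndex (m j) t) :
    dSwapTerm K m g j α t s + dSwapTerm K m g j α s t = 0 := by
  rw [dSwapTerm, dSwapTerm, hg t ht, hg s hs, nextSupp_cFun_of_gapIndex_ne hu htg hsg hne hlc,
    nextSupp_cFun_of_gapIndex_ne hu hsg htg hne.symm hlc.symm,
    cFun_cFun_comm hu htg hsg hne hlc, Finset.erase_right_comm, ← add_smul]
  have hcoeff : (-1 : MvPolynomial (Fin n) K) ^ eps α t * X (nextSupp (m j) t) *
        ((-1) ^ eps (α.erase t) s * X (nextSupp (m j) s)) +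
      (-1) ^ eps α s * X (nextSupp (m j) s) * ((-1) ^ eps (α.erase s) t * X (nextSupp (m j) t))
      = 0 := by
    linear_combination (X (nextSupp (m j) t) * X (nextSupp (m j) s) : MvPolynomial (Fin n) K) *
      neg_one_pow_eps_mul_eps_erase (R := MvPolynomial (Fin n) K) ht hs hne
  rw [hcoeff, zero_smul]

lemma psiDKTerm_eq_dSwapTerm (hlex : LexDec m) (hu : SqFreeDeg d (m j))
    (hg : ∀ t ∈ α, m (g t) = cFun (m j) t) (ht : t ∈ α) (hs : s ∈ α)
    (htg : InGap (m j) t) (hsg : InGap (m j) s) (hlc : gapIndex (m j) s = gapIndex (m j) t)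
    (hst : s < t) :
    psiDKTerm K m g j α t s = dSwapTerm K m g j α t s := by
  have hnext : nextSupp (m (g t)) s = t := by
    rw [hg t ht]; exact nextSupp_cFun_of_gapIndex_eq hu htg hsg hlc hst
  have hswap : cFun (m (g t)) s = m (g s) := by
    rw [hg t ht, hg s hs]; exact cFun_cFun_of_gapIndex_eq hu htg hsg hlc hst
  rw [psiDKTerm, dSwapTerm, hnext, hswap, symOfVec_eq_symIdx hlex,
    nextSupp_eq_of_gapIndex_eq htg.nonempty hsg.nonempty hlc hst]
  congr 1
  ring

lemma summand_pair_cancel_of_gapIndex_ne (hu : SqFreeDeg d (m j))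
    (hg : ∀ t ∈ α, m (g t) = cFun (m j) t) (ht : t ∈ α) (hs : s ∈ α) (htg : InGap (m j) t)
    (hsg : InGap (m j) s) (hne : s ≠ t) (hlc : gapIndex (m j) s ≠ gapIndex (m j) t) :
    (psiDKSummand K m g j α t s - dPsiSummand K m g j α t s) +
      (psiDKSummand K m g j α s t - dPsiSummand K m g j α s t) = 0 := by
  have hswap : dSwapTerm K m g j α s t = -dSwapTerm K m g j α t s :=
    eq_neg_of_add_eq_zero_right (dSwapTerm_add_dSwapTerm hu hg ht hs htg hsg hne hlc)
  rw [psiDKSummand, psiDKSummand, dPsiSummand, dPsiSummand,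
    isGapMax_erase_iff_of_gapIndex_ne (Ne.symm hlc), isGapMax_erase_iff_of_gapIndex_ne hlc,
    psiDKTerm_eq_dKoszulTerm ht hs hne, psiDKTerm_eq_dKoszulTerm hs ht hne.symm, hswap]
  split_ifs <;> abel

lemma summand_pair_cancel_of_gapIndex_eq (hlex : LexDec m) (hu : SqFreeDeg d (m j))
    (hg : ∀ t ∈ α, m (g t) = cFun (m j) t) (ht : t ∈ α) (hs : s ∈ α) (htg : InGap (m j) t)
    (hsg : InGap (m j) s) (hlc : gapIndex (m j) s = gapIndex (m j) t) (hst : s < t) :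
    (psiDKSummand K m g j α t s - dPsiSummand K m g j α t s) +
      (psiDKSummand K m g j α s t - dPsiSummand K m g j α s t) = 0 := by
  rw [psiDKSummand, psiDKSummand, dPsiSummand, dPsiSummand, isGapMax_erase_iff_of_le hst.le,
    if_neg (not_isGapMax_of_lt ht hlc.symm hst), psiDKTerm_eq_dKoszulTerm hs ht hst.ne',
    psiDKTerm_eq_dSwapTerm hlex hu hg ht hs htg hsg hlc hst]
  by_cases hmax : IsGapMax (m j) (α.erase t) s
  · have hmax' := hmax.of_erase hlc hst
    rw [if_pos hmax, if_pos hmax', if_pos hmax']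
    abel
  · rw [if_neg hmax]
    split_ifs <;> abel

lemma summand_pair_cancel (hlex : LexDec m) (hu : SqFreeDeg d (m j))
    (hgap : ∀ t ∈ α, InGap (m j) t) (hg : ∀ t ∈ α, m (g t) = cFun (m j) t) (ht : t ∈ α)
    (hs : s ∈ α) (hne : s ≠ t) :
    (psiDKSummand K m g j α t s - dPsiSummand K m g j α t s) +
      (psiDKSummand K m g j α s t - dPsiSummand K m g j α s t) = 0 := by
  by_cases hlc : gapIndex (m j) s = gapIndex (m j) t
  · rcases lt_or_gt_of_ne hne with hst | hts
    · exact summand_pair_cancel_of_gapIndex_eq hlex hu hg ht hs (hgap t ht) (hgap s hs) hlc hst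
    · rw [add_comm]
      exact summand_pair_cancel_of_gapIndex_eq hlex hu hg hs ht (hgap s hs) (hgap t ht)
        hlc.symm hts
  · exact summand_pair_cancel_of_gapIndex_ne hu hg ht hs (hgap t ht) (hgap s hs) hne hlc

end PairCancellation

lemma sum_sum_erase_eq_zero_of_antisymm {ι M : Type*} [DecidableEq ι] [AddCommGroup M]
    {s : Finset ι} {F : ι → ι → M} (h : ∀ a ∈ s, ∀ b ∈ s, a ≠ b → F a b + F b a = 0) :
    ∑ a ∈ s, ∑ b ∈ s.erase a, F a b = 0 := by
  rw [← Finset.sum_finset_product' s.offDiag s (fun a => s.erase a) fun p => by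
    simp only [Finset.mem_offDiag, Finset.mem_erase]; tauto]
  refine Finset.sum_involution (fun p _ => p.swap) (fun p hp => ?_) (fun p hp _ => ?_)
    (fun p hp => Finset.mem_offDiag.mpr ?_) (fun p _ => p.swap_swap)
  · obtain ⟨ha, hb, hab⟩ := Finset.mem_offDiag.mp hp
    exact h _ ha _ hb hab
  · obtain ⟨-, -, hab⟩ := Finset.mem_offDiag.mp hp
    exact fun hc => hab (congrArg Prod.snd hc)
  · obtain ⟨ha, hb, hab⟩ := Finset.mem_offDiag.mp hp
    exact ⟨hb, ha, Ne.symm hab⟩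

lemma monomial_add_single_sub_cFun {u : Fin n →₀ ℕ} {t : Fin n}
    (hE : (u.support.filter (fun v => t ≤ v)).Nonempty) :
    monomial (u + Finsupp.single t 1 - cFun u t) (1 : K) = X (nextSupp u t) := by
  rw [add_single_sub_cFun hE, X]

lemma linearCombination_symIdx {m : Fin k → (Fin n →₀ ℕ)} (i : Fin k) (β : Finset (Fin n)) :
    Finsupp.linearCombination (MvPolynomial (Fin n) K) (dFB K d m) (symIdx K m i β) =
      dFB K d m (some (i, β)) := by
  rw [symIdx]
  split_ifs with h
  · rw [Finsupp.linearCombination_single, one_smul]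
  · rw [map_zero, dFB, if_neg h]

section Expansion

variable {m : Fin k → (Fin n →₀ ℕ)} {g : Fin n → Fin k} {j : Fin k} {α : Finset (Fin n)}
  {r t : Fin n}

lemma gapIndex_cFun_of_isGapMax (hu : SqFreeDeg d (m j)) (ht : InGap (m j) t)
    (hmax : IsGapMax (m j) α t) (hr : r ∈ α.erase t) :
    gapIndex (cFun (m j) t) r = gapIndex (m j) r :=
  gapIndex_cFun hu ht
    (hmax.lt_of_gapIndex_eq (Finset.mem_of_mem_erase hr) (Finset.ne_of_mem_erase hr))

lemma erase_subset_mset_of_isGapMax (hsf : ∀ j, SqFreeDeg d (m j)) (hlex : LexDec m)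
    (hco : CointervalIdeal K d (genIdeal K (Set.range m))) (hα : ↑α ⊆ mset K m j)
    (hg : ∀ t ∈ α, m (g t) = cFun (m j) t) (ht : t ∈ α) (hmax : IsGapMax (m j) α t) :
    ↑(α.erase t) ⊆ mset K m (g t) := by
  have hgap : ∀ s ∈ α, InGap (m j) s := fun s hs => (mem_mset_iff_inGap hsf hlex hco).mp (hα hs)
  intro s hs
  obtain ⟨hne, hsα⟩ := Finset.mem_erase.mp hs
  rw [mem_mset_iff_inGap hsf hlex hco, hg t ht]
  exact inGap_cFun (hsf j) (hgap t ht) (hgap s hsα) hne (hmax.lt_of_gapIndex_eq hsα hne)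

lemma psiB_dKB_eq_sum (hsf : ∀ j, SqFreeDeg d (m j)) (hlex : LexDec m)
    (hco : CointervalIdeal K d (genIdeal K (Set.range m))) (hα : ↑α ⊆ mset K m j)
    (hcard : 1 < α.card) (hg : ∀ t ∈ α, m (g t) = cFun (m j) t) :
    Finsupp.linearCombination (MvPolynomial (Fin n) K) (psiB K d m) (dKB K m (some (j, α))) =
      ∑ t ∈ α, ∑ s ∈ α.erase t, psiDKSummand K m g j α t s := by
  have hgap : ∀ s ∈ α, InGap (m j) s := fun s hs => (mem_mset_iff_inGap hsf hlex hco).mp (hα hs)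
  have hsub : ∀ t, ↑(α.erase t) ⊆ mset K m j :=
    fun t => (Finset.coe_subset.mpr (Finset.erase_subset t α)).trans hα
  rw [dKB, if_pos hα, map_sum]
  refine Finset.sum_congr rfl fun t ht => ?_
  rw [map_smul, Finsupp.linearCombination_single, one_smul, psiB, if_pos (hsub t),
    if_neg (Finset.one_lt_card_iff_nontrivial.mp hcard).erase_nonempty.ne_empty,
    TFin_eq_filter_isGapMax hsf hlex hco (hsub t), Finset.sum_filter, Finset.smul_sum]
  refine Finset.sum_congr rfl fun s hs => ?_
  have hsα := Finset.mem_of_mem_erase hs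
  rw [psiDKSummand]
  split_ifs
  · rw [psiDKTerm, monomial_add_single_sub_cFun (hgap s hsα).nonempty, ← hg s hsα,
      symOfVec_eq_symIdx hlex, smul_smul]
  · rw [smul_zero]

lemma dFB_psiB_eq_sum (hsf : ∀ j, SqFreeDeg d (m j)) (hlex : LexDec m)
    (hco : CointervalIdeal K d (genIdeal K (Set.range m))) (hα : ↑α ⊆ mset K m j)
    (hcard : 1 < α.card) (hg : ∀ t ∈ α, m (g t) = cFun (m j) t) :
    Finsupp.linearCombination (MvPolynomial (Fin n) K) (dFB K d m) (psiB K d m (some (j, α))) =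
      ∑ t ∈ α, ∑ s ∈ α.erase t, dPsiSummand K m g j α t s := by
  have hgap : ∀ s ∈ α, InGap (m j) s := fun s hs => (mem_mset_iff_inGap hsf hlex hco).mp (hα hs)
  have hnontriv := Finset.one_lt_card_iff_nontrivial.mp hcard
  rw [psiB, if_pos hα, if_neg hnontriv.nonempty.ne_empty, TFin_eq_filter_isGapMax hsf hlex hco hα,
    map_sum, Finset.sum_filter]
  refine Finset.sum_congr rfl fun t ht => ?_
  by_cases hmax : IsGapMax (m j) α t
  swap
  · rw [if_neg hmax]
    exact (Finset.sum_eq_zero fun s _ => by rw [dPsiSummand, if_neg hmax]).symm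
  have hsub := erase_subset_mset_of_isGapMax hsf hlex hco hα hg ht hmax
  have hT : TFin K d m (m (g t)) (α.erase t) =
      (α.erase t).filter (IsGapMax (m j) (α.erase t)) := by
    rw [TFin_eq_filter_isGapMax hsf hlex hco hsub, hg t ht]
    refine Finset.filter_congr fun s hs => forall₂_congr fun r hr => ?_
    rw [gapIndex_cFun_of_isGapMax (hsf j) (hgap t ht) hmax hr,
      gapIndex_cFun_of_isGapMax (hsf j) (hgap t ht) hmax hs]
  rw [if_pos hmax, monomial_add_single_sub_cFun (hgap t ht).nonempty, ← hg t ht,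
    symOfVec_eq_symIdx hlex, map_smul, linearCombination_symIdx, dFB, if_pos hsub,
    if_neg (hnontriv.erase_nonempty (a := t)).ne_empty, hT, Finset.sum_filter, smul_add,
    Finset.smul_sum, Finset.smul_sum, ← Finset.sum_add_distrib]
  refine Finset.sum_congr rfl fun s hs => ?_
  rw [dPsiSummand, if_pos hmax, dKoszulTerm, smul_smul]
  congr 1
  split_ifs
  · rw [dSwapTerm, smul_smul,
      monomial_add_single_sub_cFun ((mem_mset_iff_inGap hsf hlex hco).mp (hsub hs)).nonempty]
  · rw [smul_zero]

end Expansion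

lemma psiB_dKB_eq_dFB_psiB_singleton {m : Fin k → (Fin n →₀ ℕ)} (hsf : ∀ j, SqFreeDeg d (m j))
    (hlex : LexDec m) (hco : CointervalIdeal K d (genIdeal K (Set.range m))) {j i : Fin k}
    {t : Fin n} (ht : t ∈ mset K m j) (hi : m i = cFun (m j) t) :
    Finsupp.linearCombination (MvPolynomial (Fin n) K) (psiB K d m) (dKB K m (some (j, {t}))) =
      Finsupp.linearCombination (MvPolynomial (Fin n) K) (dFB K d m)
        (psiB K d m (some (j, {t}))) := by
  have hgap := (mem_mset_iff_inGap hsf hlex hco).mp ht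
  have hsub : ↑({t} : Finset (Fin n)) ⊆ mset K m j := by simpa using ht
  have heps : eps {t} t = 0 := by simp [eps]
  have hT : TFin K d m (m j) {t} = {t} := by
    have hmax : IsGapMax (m j) {t} t := fun s hs _ => (Finset.mem_singleton.mp hs).le
    rw [TFin_eq_filter_isGapMax hsf hlex hco hsub, Finset.filter_singleton, if_pos hmax]
  rw [dKB, if_pos hsub, Finset.sum_singleton, Finset.erase_singleton, heps, map_smul,
    Finsupp.linearCombination_single, one_smul, psiB, if_pos (by simp), if_pos rfl,
    psiB, if_pos hsub, if_neg (Finset.singleton_ne_empty t), hT, Finset.sum_singleton, heps,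
    Finset.erase_singleton, monomial_add_single_sub_cFun hgap.nonempty, ← hi,
    symOfVec_eq_symIdx hlex, map_smul, linearCombination_symIdx, dFB,
    if_pos (by simp), if_pos rfl, Finsupp.smul_single, Finsupp.smul_single, hi,
    cFun_eq hgap.nonempty]
  have hle : Finsupp.single (nextSupp (m j) t) 1 ≤ m j + Finsupp.single t 1 := by
    rw [Finsupp.single_le_iff, Finsupp.add_apply]
    have := Finsupp.mem_support_iff.mp (nextSupp_mem hgap.nonempty)
    omega
  congr 1
  simp only [pow_zero, one_mul, smul_eq_mul, X, monomial_mul, mul_one]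
  rw [add_tsub_cancel_of_le hle, add_comm]

end Development

/-- for a cointerval ideal, `ψ ∘ d_K = d ∘ ψ` on every symbol `(m;α)`
with `α ⊆ set(m)`; that is, `ψ` is a chain map lifting the inclusion of colon ideals
used in the mapping cone construction. -/
theorem stmt17 (K : Type*) [Field K] {n k d : ℕ}
    (m : Fin k → (Fin n →₀ ℕ))
    (hsf : ∀ j : Fin k, SqFreeDeg d (m j))
    (hlex : LexDec m)
    (hco : CointervalIdeal K d (genIdeal K (Set.range m)))
    (j : Fin k) (α : Finset (Fin n)) (hα : ↑α ⊆ mset K m j) :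
    Finsupp.linearCombination (MvPolynomial (Fin n) K) (psiB K d m)
        (dKB K m (some (j, α))) =
      Finsupp.linearCombination (MvPolynomial (Fin n) K) (dFB K d m)
        (psiB K d m (some (j, α))) := by
  have hgap : ∀ t ∈ α, InGap (m j) t := fun t ht => (mem_mset_iff_inGap hsf hlex hco).mp (hα ht)
  obtain ⟨g, hg⟩ := exists_index_cFun hsf hco j
  replace hg : ∀ t ∈ α, m (g t) = cFun (m j) t := fun t ht => hg t (hgap t ht)
  obtain hcard | hcard | hcard : α.card = 0 ∨ α.card = 1 ∨ 1 < α.card := by omega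
  · rw [Finset.card_eq_zero.mp hcard]
    simp [dKB, psiB, dFB]
  · obtain ⟨t, rfl⟩ := Finset.card_eq_one.mp hcard
    exact psiB_dKB_eq_dFB_psiB_singleton hsf hlex hco (hα (Finset.mem_singleton_self t))
      (hg t (Finset.mem_singleton_self t))
  · rw [psiB_dKB_eq_sum hsf hlex hco hα hcard hg, dFB_psiB_eq_sum hsf hlex hco hα hcard hg,
      ← sub_eq_zero, ← Finset.sum_sub_distrib]
    simp_rw [← Finset.sum_sub_distrib]
    exact sum_sum_erase_eq_zero_of_antisymm fun t ht s hs hne =>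
      summand_pair_cancel hlex (hsf j) hgap hg ht hs hne.symm
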